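/- arXiv:2404.15978 — 2 statements merged into one kernel-verified Lean document; each statement's English description precedes it below -/
import Mathlib

section
/- Let C ⊂ ℝⁿ be a compact, convex set with 0 in its interior, and A a linear map with A(∂C) ⊆ C. Then the discrete-time system x⁺ = A x is Lyapunov stable at the origin: for every x₀ and every scaling s > 0 with x₀ ∈ sC, the entire trajectory x_k = A^k x₀ remains in sC for all k ≥ 0. -/
open scoped Pointwise

theorem lyapunov_stability_of_inward_pointing
    (n : ℕ) (C : Set (Fin n → ℝ)) (hcomp : IsCompact C) (hconv : Convex ℝ C)
    (h0 : (0 : Fin n → ℝ) ∈ interior C)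
    (A : Matrix (Fin n) (Fin n) ℝ)
    (hinward : ∀ x ∈ frontier C, A.mulVec x ∈ C) :
    ∀ (x₀ : Fin n → ℝ) (s : ℝ), 0 < s → x₀ ∈ s • C →
      ∀ k : ℕ, (A ^ k).mulVec x₀ ∈ s • C := by
  have h0C : (0 : Fin n → ℝ) ∈ C := interior_subset h0
  have hcl : IsClosed C := hcomp.isClosed
  -- Key step: A maps C into C.
  have hAC : ∀ x ∈ C, A.mulVec x ∈ C := by
    intro x hx
    by_cases hx0 : x = 0
    · subst hx0; simpa [Matrix.mulVec_zero] using h0C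
    · have hxn : 0 < ‖x‖ := norm_pos_iff.mpr hx0
      set S : Set ℝ := {t : ℝ | 0 ≤ t ∧ t • x ∈ C} with hS
      have hSne : (1 : ℝ) ∈ S := ⟨zero_le_one, by simpa using hx⟩
      obtain ⟨R, hR⟩ := hcomp.isBounded.subset_ball 0
      have hSbdd : BddAbove S := by
        refine ⟨R / ‖x‖, ?_⟩
        rintro t ⟨ht0, htC⟩
        have := hR htC
        rw [Metric.mem_ball, dist_zero_right, norm_smul, Real.norm_of_nonneg ht0] at this
        have : t * ‖x‖ ≤ R := le_of_lt this
        exact (le_div_iff₀ hxn).mpr this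
      have hSclosed : IsClosed S := by
        have : S = {t : ℝ | 0 ≤ t} ∩ (fun t : ℝ => t • x) ⁻¹' C := rfl
        rw [this]
        exact (isClosed_le continuous_const continuous_id).inter
          (hcl.preimage (by continuity))
      set T := sSup S with hT
      have hTS : T ∈ S := hSclosed.csSup_mem ⟨1, hSne⟩ hSbdd
      have hT1 : (1 : ℝ) ≤ T := le_csSup hSbdd hSne
      have hTpos : 0 < T := lt_of_lt_of_le one_pos hT1
      -- T • x is on the frontier
      have hfr : T • x ∈ frontier C := by
        rw [frontier_eq_closure_inter_closure]
        constructor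
        · exact subset_closure hTS.2
        · -- T • x ∈ closure Cᶜ : points (T+δ) • x are outside C and converge
          have hnotin : ∀ δ : ℝ, 0 < δ → (T + δ) • x ∉ C := by
            intro δ hδ hmem
            have : T + δ ∈ S := ⟨by linarith, hmem⟩
            have := le_csSup hSbdd this
            linarith
          have : Filter.Tendsto (fun δ : ℝ => (T + δ) • x) (nhdsWithin 0 (Set.Ioi 0))
              (nhds (T • x)) := by
            have : Filter.Tendsto (fun δ : ℝ => (T + δ) • x) (nhds 0) (nhds (T • x)) := by
              have h1 : Filter.Tendsto (fun δ : ℝ => T + δ) (nhds 0) (nhds T) := by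
                simpa using (tendsto_const_nhds.add Filter.tendsto_id :
                  Filter.Tendsto (fun δ : ℝ => T + δ) (nhds 0) (nhds (T + 0)))
              exact h1.smul tendsto_const_nhds
            exact this.mono_left nhdsWithin_le_nhds
          refine mem_closure_of_tendsto this ?_
          filter_upwards [self_mem_nhdsWithin] with δ hδ
          exact hnotin δ hδ
      have hATx : A.mulVec (T • x) ∈ C := hinward _ hfr
      have heq : A.mulVec x = T⁻¹ • A.mulVec (T • x) := by
        rw [Matrix.mulVec_smul, smul_smul, inv_mul_cancel₀ (ne_of_gt hTpos), one_smul]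
      rw [heq]
      exact hconv.smul_mem_of_zero_mem h0C hATx
        ⟨le_of_lt (inv_pos.mpr hTpos), inv_le_one_of_one_le₀ hT1⟩
  -- Now the main claim
  rintro x₀ s hs ⟨c, hc, rfl⟩ k
  have hk : (A ^ k).mulVec c ∈ C := by
    induction k with
    | zero => simpa [Matrix.one_mulVec] using hc
    | succ m ih =>
      have : (A ^ (m + 1)).mulVec c = A.mulVec ((A ^ m).mulVec c) := by
        rw [pow_succ', Matrix.mulVec_mulVec]
      rw [this]
      exact hAC _ ih
  exact ⟨(A ^ k).mulVec c, hk, by rw [Matrix.mulVec_smul]⟩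
end

section
/- Let C ⊂ ℝⁿ be a compact convex set containing 0 in its interior, and A a linear map with A(∂C) ⊆ C. Then every point x ∈ ℝⁿ lies in sC for some s > 0, and consequently the sequence (A^k x) is bounded for every x. -/
open scoped Pointwise

/-!
Since `C` is a bounded convex neighbourhood of `0`, every `y ∈ C \ {0}` is `g • b` with `b` on the
frontier and `g = gauge C y ∈ (0, 1]`; hence `A y = g • A b` lies on the segment from `0` to a point
of `C`, so `A` maps `C` into itself. As `C` is absorbent, every `x` lies in some `s • C`, which is
then invariant under `A` and bounded.
-/

open Set Bornology Topology

theorem Convex.mapsTo_of_mapsTo_frontier {E F : Type*} [NormedAddCommGroup E] [NormedSpace ℝ E]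
    [AddCommGroup F] [Module ℝ F] {C : Set E} {D : Set F} (hC : Convex ℝ C) (hC0 : C ∈ 𝓝 0)
    (hCb : IsBounded C) (hD : StarConvex ℝ 0 D) (hD0 : (0 : F) ∈ D) (f : E →ₗ[ℝ] F)
    (hf : MapsTo f (frontier C) D) : MapsTo f C D := by
  intro y hy
  rcases eq_or_ne y 0 with rfl | hy0
  · simpa using hD0
  have hg0 : 0 < gauge C y :=
    (gauge_pos (absorbent_nhds_zero hC0) ((NormedSpace.isVonNBounded_iff ℝ).2 hCb)).2 hy0
  have hfrontier : (gauge C y)⁻¹ • y ∈ frontier C := by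
    rw [← gauge_eq_one_iff_mem_frontier hC hC0, gauge_smul_of_nonneg (inv_nonneg.2 hg0.le),
      smul_eq_mul, inv_mul_cancel₀ hg0.ne']
  have := hD.smul_mem (hf hfrontier) hg0.le (gauge_le_one_of_mem hy)
  rwa [← map_smul, smul_inv_smul₀ hg0.ne'] at this

theorem Module.End.isBounded_range_pow_apply {E : Type*} [NormedAddCommGroup E]
    [NormedSpace ℝ E] {C : Set E} (hC0 : C ∈ 𝓝 0) (hCb : IsBounded C) (f : Module.End ℝ E)
    (hf : MapsTo f C C) (x : E) : IsBounded (range fun k : ℕ ↦ (f ^ k) x) := by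
  obtain ⟨s, -, c, hc, rfl⟩ := (absorbent_nhds_zero hC0).gauge_set_nonempty (x := x)
  refine (hCb.smul₀ s).subset ?_
  rintro _ ⟨k, rfl⟩
  show (f ^ k) (s • c) ∈ s • C
  rw [map_smul, Module.End.pow_apply]
  exact smul_mem_smul_set (hf.iterate k hc)

theorem bounded_trajectories_of_inward_pointing
    (n : ℕ) (C : Set (Fin n → ℝ)) (hcomp : IsCompact C) (hconv : Convex ℝ C)
    (h0 : (0 : Fin n → ℝ) ∈ interior C)
    (A : Matrix (Fin n) (Fin n) ℝ)
    (hinward : ∀ x ∈ frontier C, A.mulVec x ∈ C) :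
    (∀ x : Fin n → ℝ, ∃ s : ℝ, 0 < s ∧ x ∈ s • C) ∧
    (∀ x : Fin n → ℝ, ∃ M : ℝ, ∀ k : ℕ, ‖(A ^ k).mulVec x‖ ≤ M) := by
  have hC0 : C ∈ 𝓝 0 := mem_interior_iff_mem_nhds.mp h0
  refine ⟨fun x ↦ (absorbent_nhds_zero hC0).gauge_set_nonempty, fun x ↦ ?_⟩
  have hAC : MapsTo (Matrix.toLin' A) C C :=
    hconv.mapsTo_of_mapsTo_frontier hC0 hcomp.isBounded (hconv.starConvex (mem_of_mem_nhds hC0))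
      (mem_of_mem_nhds hC0) _ fun y hy ↦ hinward y hy
  obtain ⟨M, hM⟩ := isBounded_iff_forall_norm_le.mp
    (Module.End.isBounded_range_pow_apply hC0 hcomp.isBounded _ hAC x)
  exact ⟨M, fun k ↦ by simpa only [← Matrix.toLin'_pow, Matrix.toLin'_apply] using hM _ ⟨k, rfl⟩⟩
end
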